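/- Under the cluster assumption, the majority-vote classifier ĝ_n satisfies E_λ(ĝ_n) ≤ 2 ∑_{j≥1} δ_j exp(-n δ_j² / 2), where E_λ denotes the λ-thresholded excess risk E_n ∫_{Γ(λ)} |2η(x)-1| 1_{ĝ_n(x) ≠ g*(x)} p(x) dx. -/

import Mathlib

open MeasureTheory ProbabilityTheory Real Classical

lemma cosh_bound {t : ℝ} (ht : 0 ≤ t) :
    Real.cosh t - t * Real.sinh t ≤ Real.exp (-(t ^ 2) / 2) := by
  set F : ℝ → ℝ := fun s => (Real.cosh s - s * Real.sinh s) * Real.exp (s ^ 2 / 2) with hF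
  have hder : ∀ s : ℝ, HasDerivAt F (-(s ^ 2) * Real.sinh s * Real.exp (s ^ 2 / 2)) s := by
    intro s
    have h1 : HasDerivAt (fun s : ℝ => Real.cosh s - s * Real.sinh s)
        (Real.sinh s - (1 * Real.sinh s + s * Real.cosh s)) s :=
      (Real.hasDerivAt_cosh s).sub ((hasDerivAt_id s).mul (Real.hasDerivAt_sinh s))
    have h2 : HasDerivAt (fun s : ℝ => Real.exp (s ^ 2 / 2))
        (Real.exp (s ^ 2 / 2) * (2 * s ^ 1 / 2)) s :=
      (((hasDerivAt_pow 2 s)).div_const 2).exp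
    have : HasDerivAt F ((Real.sinh s - (1 * Real.sinh s + s * Real.cosh s)) * Real.exp (s ^ 2 / 2) +
        (Real.cosh s - s * Real.sinh s) * (Real.exp (s ^ 2 / 2) * (2 * s ^ 1 / 2))) s := h1.mul h2
    convert this using 1
    ring
  have hanti : AntitoneOn F (Set.Icc 0 t) := by
    apply antitoneOn_of_deriv_nonpos (convex_Icc 0 t)
    · exact fun s _ => ((hder s).differentiableAt.continuousAt).continuousWithinAt
    · exact fun s _ => ((hder s).differentiableAt).differentiableWithinAt
    · intro s hs
      rw [interior_Icc] at hs
      rw [(hder s).deriv]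
      have h0 : 0 ≤ Real.sinh s := Real.sinh_nonneg_iff.2 hs.1.le
      have h1 := Real.exp_pos (s ^ 2 / 2)
      have h2 := mul_nonneg (mul_nonneg (sq_nonneg s) h0) h1.le
      nlinarith [h2]
  have hFt : F t ≤ F 0 := by
    rcases eq_or_lt_of_le ht with h | h
    · simp [← h]
    · exact hanti (Set.left_mem_Icc.2 ht) (Set.mem_Icc.2 ⟨ht, le_rfl⟩) ht
  have hF0 : F 0 = 1 := by simp [hF]
  rw [hF0, hF] at hFt
  have hpos : 0 < Real.exp (t ^ 2 / 2) := Real.exp_pos _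
  have key : Real.exp (-(t ^ 2) / 2) * Real.exp (t ^ 2 / 2) = 1 := by
    rw [← Real.exp_add]; ring_nf; exact Real.exp_zero
  have := hFt
  simp only at this
  nlinarith [this, key, hpos]

lemma mgf_le_of_bounded {Ω : Type*} [MeasurableSpace Ω] {μ : Measure Ω}
    [IsProbabilityMeasure μ] {V : Ω → ℝ} (hmeas : Measurable V)
    (hb : ∀ ω, |V ω| ≤ 1) {δ : ℝ} (hδ0 : 0 ≤ δ) (hmean : ∫ ω, V ω ∂μ = δ) :
    mgf V μ (-δ) ≤ Real.cosh δ - δ * Real.sinh δ := by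
  have hVint : Integrable V μ :=
    (integrable_const (1:ℝ)).mono' hmeas.aestronglyMeasurable
      (ae_of_all _ fun ω => by simpa using hb ω)
  have hpt : ∀ ω, Real.exp (-δ * V ω) ≤
      (Real.exp δ + Real.exp (-δ)) / 2 + V ω * ((Real.exp (-δ) - Real.exp δ) / 2) := by
    intro ω
    have hv := abs_le.1 (hb ω)
    have ha : (0:ℝ) ≤ (1 - V ω) / 2 := by linarith
    have hbb : (0:ℝ) ≤ (1 + V ω) / 2 := by linarith
    have hab : (1 - V ω) / 2 + (1 + V ω) / 2 = 1 := by ring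
    have h := convexOn_exp.2 (Set.mem_univ δ) (Set.mem_univ (-δ)) ha hbb hab
    simp only [smul_eq_mul] at h
    calc Real.exp (-δ * V ω) = Real.exp ((1 - V ω)/2 * δ + (1 + V ω)/2 * (-δ)) := by ring_nf
      _ ≤ (1 - V ω)/2 * Real.exp δ + (1 + V ω)/2 * Real.exp (-δ) := h
      _ = (Real.exp δ + Real.exp (-δ)) / 2 + V ω * ((Real.exp (-δ) - Real.exp δ) / 2) := by ring
  have hint1 : Integrable (fun ω => Real.exp (-δ * V ω)) μ := by
    refine (integrable_const (Real.exp δ)).mono'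
      ((hmeas.const_mul (-δ)).exp).aestronglyMeasurable (ae_of_all _ fun ω => ?_)
    rw [Real.norm_eq_abs, abs_of_pos (Real.exp_pos _), Real.exp_le_exp]
    have hv := abs_le.1 (hb ω)
    nlinarith
  have hint2 : Integrable (fun ω =>
      (Real.exp δ + Real.exp (-δ)) / 2 + V ω * ((Real.exp (-δ) - Real.exp δ) / 2)) μ :=
    (integrable_const _).add (hVint.mul_const _)
  have hmono := integral_mono hint1 hint2 hpt
  rw [mgf]
  refine hmono.trans ?_
  rw [integral_add (integrable_const _) (hVint.mul_const _), integral_const,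
    integral_mul_const, hmean, probReal_univ]
  simp only [ENNReal.toReal_one, smul_eq_mul, one_mul, Real.cosh_eq, Real.sinh_eq]
  ring_nf
  try ring
  try rfl

lemma conc {Ω : Type*} [MeasurableSpace Ω] (μ : Measure Ω) [IsProbabilityMeasure μ]
    {n : ℕ} (V : Fin n → Ω → ℝ) (hmeas : ∀ i, Measurable (V i))
    (hb : ∀ i ω, |V i ω| ≤ 1)
    (hindep : iIndepFun V μ)
    {δ : ℝ} (hδ0 : 0 ≤ δ) (hδ1 : δ ≤ 1) (hmean : ∀ i, ∫ ω, V i ω ∂μ = δ) :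
    (μ {ω | (∑ i, V i ω) ≤ 0}).toReal ≤ Real.exp (-(n:ℝ) * δ ^ 2 / 2) := by
  have hSmeas : Measurable (fun ω => ∑ i, V i ω) :=
    Finset.measurable_sum _ fun i _ => hmeas i
  have hint : Integrable (fun ω => Real.exp (-δ * (∑ i, V i ω))) μ := by
    refine (integrable_const (Real.exp (δ * n))).mono'
      ((hSmeas.const_mul (-δ)).exp).aestronglyMeasurable (ae_of_all _ fun ω => ?_)
    rw [Real.norm_eq_abs, abs_of_pos (Real.exp_pos _), Real.exp_le_exp]
    have hsum : -(n:ℝ) ≤ ∑ i, V i ω := by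
      have : ∀ i ∈ Finset.univ, (-1:ℝ) ≤ V i ω := fun i _ => (abs_le.1 (hb i ω)).1
      calc -(n:ℝ) = ∑ _i : Fin n, (-1:ℝ) := by simp
        _ ≤ ∑ i, V i ω := Finset.sum_le_sum this
    nlinarith
  have hchern := measure_le_le_exp_mul_mgf (μ := μ) (X := fun ω => ∑ i, V i ω)
    (t := -δ) 0 (by linarith) hint
  simp only [mul_zero, neg_zero, Real.exp_zero, one_mul, neg_neg] at hchern
  have hsum : (fun ω => ∑ i, V i ω) = ∑ i ∈ Finset.univ, V i := by ext ω; simp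
  rw [hsum, hindep.mgf_sum hmeas Finset.univ] at hchern
  set B := Real.cosh δ - δ * Real.sinh δ with hB
  have hBpos : 0 < B := by
    rw [hB, Real.cosh_eq, Real.sinh_eq]
    nlinarith [Real.exp_pos δ, Real.exp_pos (-δ)]
  have hprod : (∏ i : Fin n, mgf (V i) μ (-δ)) ≤ B ^ n := by
    calc (∏ i : Fin n, mgf (V i) μ (-δ)) ≤ ∏ _i : Fin n, B :=
          Finset.prod_le_prod (fun i _ => mgf_nonneg)
            (fun i _ => mgf_le_of_bounded (hmeas i) (hb i) hδ0 (hmean i))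
      _ = B ^ n := by simp
  refine hchern.trans (hprod.trans ?_)
  have h1 : B ^ n ≤ (Real.exp (-(δ ^ 2) / 2)) ^ n :=
    pow_le_pow_left₀ hBpos.le (cosh_bound hδ0) n
  refine h1.trans_eq ?_
  rw [← Real.exp_nat_mul]
  ring_nf

/-- Under the cluster assumption CA(λ), the majority-vote classifier `ĝ_n` over the
connected components `T j` of the level set `Γ(λ)` satisfies
`E_λ(ĝ_n) ≤ 2 ∑_j δ_j exp(-n δ_j² / 2)`. -/
theorem majority_vote_excess_risk_bound {d n : ℕ} (hn : 0 < n)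
    (p η : EuclideanSpace ℝ (Fin d) → ℝ)
    (hp_nonneg : ∀ x, 0 ≤ p x) (hp_meas : Measurable p)
    (hp_density : ∫ x, p x = 1)
    (hη : ∀ x, 0 ≤ η x ∧ η x ≤ 1) (hη_meas : Measurable η)
    (lam : ℝ) (hlam : 0 < lam)
    (T : ℕ → Set (EuclideanSpace ℝ (Fin d)))
    (hT_meas : ∀ j, MeasurableSet (T j))
    (hT_disj : Pairwise (Function.onFun Disjoint T))
    (hT_union : (⋃ j, T j) = {x | lam ≤ p x})
    -- the cluster assumption CA(λ):
    (hCA : ∀ j, (∀ x ∈ T j, (1:ℝ)/2 ≤ η x) ∨ (∀ x ∈ T j, η x < 1/2))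
    {Ω : Type*} [MeasurableSpace Ω] (μ : Measure Ω) [IsProbabilityMeasure μ]
    (X : Fin n → Ω → EuclideanSpace ℝ (Fin d)) (Y : Fin n → Ω → ℝ)
    (hX_meas : ∀ i, Measurable (X i)) (hY_meas : ∀ i, Measurable (Y i))
    (hY_val : ∀ i ω, Y i ω = 0 ∨ Y i ω = 1)
    -- the sample is i.i.d.:
    (h_indep : iIndepFun
      (fun i ω => (X i ω, Y i ω)) μ)
    (h_ident : ∀ i : Fin n, Measure.map (fun ω => (X i ω, Y i ω)) μ
      = Measure.map (fun ω => (X ⟨0, hn⟩ ω, Y ⟨0, hn⟩ ω)) μ)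
    -- the pair (X_i, Y_i) is distributed according to (p, η):
    (h_mean : ∀ (i : Fin n) (A : Set (EuclideanSpace ℝ (Fin d))), MeasurableSet A →
      ∫ ω, (2 * Y i ω - 1) * A.indicator (fun _ => (1:ℝ)) (X i ω) ∂μ
        = ∫ x in A, (2 * η x - 1) * p x) :
    ∫ ω, (∫ x in {x | lam ≤ p x},
        |2 * η x - 1| *
          (if (if ∃ j, x ∈ T j ∧
                0 < ∑ i : Fin n, (2 * Y i ω - 1) *
                  (T j).indicator (fun _ => (1:ℝ)) (X i ω) then (1:ℝ) else 0)
              ≠ (if (1:ℝ)/2 ≤ η x then (1:ℝ) else 0) then 1 else 0) * p x) ∂μ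
      ≤ 2 * ∑' j : ℕ, (∫ x in T j, |2 * η x - 1| * p x) *
          exp (-(n : ℝ) * (∫ x in T j, |2 * η x - 1| * p x) ^ 2 / 2) := by
  -- notation
  set g : EuclideanSpace ℝ (Fin d) → ℝ := fun x => |2 * η x - 1| * p x with hg_def
  set δ : ℕ → ℝ := fun j => ∫ x in T j, g x with hδ_def
  set Z : ℕ → Ω → ℝ := fun j ω => ∑ i : Fin n, (2 * Y i ω - 1) *
      (T j).indicator (fun _ => (1:ℝ)) (X i ω) with hZ_def
  have habs : ∀ x, |2 * η x - 1| ≤ 1 := by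
    intro x; have := hη x; rw [abs_le]; constructor <;> linarith [this.1, this.2]
  -- p and g integrable
  have hp_int : Integrable p := by
    by_contra h
    rw [integral_undef h] at hp_density; norm_num at hp_density
  have hg_meas : Measurable g :=
    (((hη_meas.const_mul 2).sub measurable_const).abs).mul hp_meas
  have hg_nonneg : ∀ x, 0 ≤ g x := fun x => mul_nonneg (abs_nonneg _) (hp_nonneg x)
  have hg_le_p : ∀ x, g x ≤ p x := by
    intro x
    calc g x ≤ 1 * p x := mul_le_mul_of_nonneg_right (habs x) (hp_nonneg x)
      _ = p x := one_mul _
  have hg_int : Integrable g :=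
    hp_int.mono' hg_meas.aestronglyMeasurable
      (ae_of_all _ fun x => by rw [Real.norm_eq_abs, abs_of_nonneg (hg_nonneg x)]; exact hg_le_p x)
  -- δ properties
  have hδ_nonneg : ∀ j, 0 ≤ δ j := fun j =>
    setIntegral_nonneg (hT_meas j) fun x _ => hg_nonneg x
  have hδ_le_one : ∀ j, δ j ≤ 1 := by
    intro j
    calc δ j ≤ ∫ x in T j, p x :=
          setIntegral_mono_on hg_int.integrableOn hp_int.integrableOn (hT_meas j)
            (fun x _ => hg_le_p x)
      _ ≤ ∫ x, p x := setIntegral_le_integral hp_int (ae_of_all _ hp_nonneg)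
      _ = 1 := hp_density
  have hδ_summable : Summable δ :=
    (hasSum_integral_iUnion hT_meas hT_disj (hg_int.integrableOn)).summable
  -- measurability of Z
  have hZ_meas : ∀ j, Measurable (Z j) := by
    intro j
    apply Finset.measurable_sum
    intro i _
    exact (((hY_meas i).const_mul 2).sub measurable_const).mul
      ((measurable_const.indicator (hT_meas j)).comp (hX_meas i))
  -- the error events
  set e : ℕ → Set Ω := fun j =>
    if ∀ x ∈ T j, (1:ℝ)/2 ≤ η x then {ω | Z j ω ≤ 0} else {ω | 0 < Z j ω} with he_def
  have he_meas : ∀ j, MeasurableSet (e j) := by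
    intro j
    rw [he_def]
    by_cases h : ∀ x ∈ T j, (1:ℝ)/2 ≤ η x
    · simp only [if_pos h]; exact measurableSet_le (hZ_meas j) measurable_const
    · simp only [if_neg h]; exact measurableSet_lt measurable_const (hZ_meas j)
  -- Step 1: pointwise computation of the inner integral
  have step1 : ∀ ω, (∫ x in {x | lam ≤ p x},
        |2 * η x - 1| *
          (if (if ∃ j, x ∈ T j ∧ 0 < Z j ω then (1:ℝ) else 0)
              ≠ (if (1:ℝ)/2 ≤ η x then (1:ℝ) else 0) then 1 else 0) * p x)
      = ∑' j, Set.indicator (e j) (fun _ => (1:ℝ)) ω * δ j := by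
    intro ω
    set P : EuclideanSpace ℝ (Fin d) → Prop := fun x => ∃ j, x ∈ T j ∧ 0 < Z j ω with hP_def
    set Q : EuclideanSpace ℝ (Fin d) → Prop := fun x => (1:ℝ)/2 ≤ η x with hQ_def
    set m : EuclideanSpace ℝ (Fin d) → ℝ := fun x =>
      if (if P x then (1:ℝ) else 0) ≠ (if Q x then (1:ℝ) else 0) then 1 else 0 with hm_def
    have hm_val : ∀ x, m x = if (P x ∧ ¬ Q x) ∨ (Q x ∧ ¬ P x) then 1 else 0 := by
      intro x
      rw [hm_def]
      by_cases h1 : P x <;> by_cases h2 : Q x <;>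
        simp only [if_pos, if_neg, h1, h2, if_true, if_false, ite_true, ite_false,
          not_true, not_false_iff, and_true, and_false, true_and, false_and, or_false,
          false_or, or_self, ne_eq] <;> norm_num
    have hm01 : ∀ x, m x = 0 ∨ m x = 1 := by
      intro x; rw [hm_val]
      by_cases h : (P x ∧ ¬ Q x) ∨ (Q x ∧ ¬ P x)
      · right; rw [if_pos h]
      · left; rw [if_neg h]
    have hSP : MeasurableSet {x | P x} := by
      have : {x | P x} = ⋃ j, (T j ∩ {x | 0 < Z j ω}) := by
        ext x; simp [hP_def, Set.mem_iUnion, Set.mem_setOf_eq]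
      rw [this]
      refine MeasurableSet.iUnion fun j => (hT_meas j).inter ?_
      by_cases h : 0 < Z j ω
      · simp only [h]; simp
      · simp only [h]; simp
    have hSQ : MeasurableSet {x | Q x} := measurableSet_le measurable_const hη_meas
    have hm_meas : Measurable m := by
      have : m = Set.indicator (({x | P x} \ {x | Q x}) ∪ ({x | Q x} \ {x | P x}))
          (fun _ => (1:ℝ)) := by
        funext x
        have hmem : (x ∈ ({x | P x} \ {x | Q x}) ∪ ({x | Q x} \ {x | P x}))
            ↔ ((P x ∧ ¬ Q x) ∨ (Q x ∧ ¬ P x)) := by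
          simp [Set.mem_union, Set.mem_diff, Set.mem_setOf_eq]
        rw [hm_val, Set.indicator_apply]
        by_cases h : (P x ∧ ¬ Q x) ∨ (Q x ∧ ¬ P x)
        · rw [if_pos h, if_pos (hmem.2 h)]
        · rw [if_neg h, if_neg (fun hh => h (hmem.1 hh))]
      rw [this]
      exact measurable_const.indicator ((hSP.diff hSQ).union (hSQ.diff hSP))
    set f : EuclideanSpace ℝ (Fin d) → ℝ := fun x => |2 * η x - 1| * m x * p x with hf_def
    have hf_meas : Measurable f :=
      ((((hη_meas.const_mul 2).sub measurable_const).abs).mul hm_meas).mul hp_meas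
    have hf_int : IntegrableOn f (⋃ j, T j) := by
      refine (hp_int.integrableOn).mono' hf_meas.aestronglyMeasurable (ae_of_all _ fun x => ?_)
      simp only [Real.norm_eq_abs, hf_def]
      rcases hm01 x with h | h <;> rw [h]
      · simp [hp_nonneg x]
      · rw [mul_one, abs_of_nonneg (hg_nonneg x)]; exact hg_le_p x
    rw [← hT_union, integral_iUnion hT_meas hT_disj hf_int]
    congr 1
    funext j
    have hconst : ∀ x ∈ T j, f x = Set.indicator (e j) (fun _ => (1:ℝ)) ω * g x := by
      intro x hx
      have hex : P x ↔ 0 < Z j ω := by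
        rw [hP_def]
        constructor
        · rintro ⟨j', hxj', hz⟩
          rcases eq_or_ne j' j with rfl | hne
          · exact hz
          · exact absurd (Set.mem_inter hxj' hx)
              (by rw [(hT_disj hne).inter_eq]; exact Set.notMem_empty x)
        · exact fun hz => ⟨j, hx, hz⟩
      simp only [hf_def, hg_def]
      rw [hm_val x]
      rcases hCA j with hc | hc
      · have hQx : Q x := hc x hx
        have hej : e j = {ω | Z j ω ≤ 0} := by simp only [he_def]; rw [if_pos hc]
        by_cases hz : 0 < Z j ω
        · have h1 : ¬ ((P x ∧ ¬ Q x) ∨ (Q x ∧ ¬ P x)) := by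
            rw [hex]; tauto
          have h2 : ω ∉ e j := by rw [hej]; exact fun h => absurd hz (not_lt.2 h)
          rw [if_neg h1, Set.indicator_of_notMem h2]
          ring
        · have h1 : (P x ∧ ¬ Q x) ∨ (Q x ∧ ¬ P x) := by rw [hex]; tauto
          have h2 : ω ∈ e j := by rw [hej]; exact not_lt.1 hz
          rw [if_pos h1, Set.indicator_of_mem h2]
          ring
      · have hQx : ¬ Q x := not_le.2 (hc x hx)
        have hej : e j = {ω | 0 < Z j ω} := by
          simp only [he_def]
          rw [if_neg (by push_neg; exact ⟨x, hx, hc x hx⟩)]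
        by_cases hz : 0 < Z j ω
        · have h1 : (P x ∧ ¬ Q x) ∨ (Q x ∧ ¬ P x) := by rw [hex]; tauto
          have h2 : ω ∈ e j := by rw [hej]; exact hz
          rw [if_pos h1, Set.indicator_of_mem h2]
          ring
        · have h1 : ¬ ((P x ∧ ¬ Q x) ∨ (Q x ∧ ¬ P x)) := by rw [hex]; tauto
          have h2 : ω ∉ e j := by rw [hej]; exact hz
          rw [if_neg h1, Set.indicator_of_notMem h2]
          ring
    rw [setIntegral_congr_fun (hT_meas j) hconst, integral_const_mul]
  -- probability bound helpers
  have htoReal_le_one : ∀ s : Set Ω, (μ s).toReal ≤ 1 := by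
    intro s
    have := ENNReal.toReal_mono (by simp) (prob_le_one (μ := μ) (s := s))
    simpa using this
  -- Step 2: swap integral and sum
  have hFval : ∀ j, ∫ ω, Set.indicator (e j) (fun _ => (1:ℝ)) ω * δ j ∂μ
      = (μ (e j)).toReal * δ j := by
    intro j
    rw [integral_mul_const, integral_indicator_const (1:ℝ) (he_meas j)]
    simp [measureReal_def]
  have hFint : ∀ j, Integrable (fun ω => Set.indicator (e j) (fun _ => (1:ℝ)) ω * δ j) μ :=
    fun j => ((integrable_const (1:ℝ)).indicator (he_meas j)).mul_const _
  have hFnorm : ∀ j, (fun ω => ‖Set.indicator (e j) (fun _ => (1:ℝ)) ω * δ j‖)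
      = fun ω => Set.indicator (e j) (fun _ => (1:ℝ)) ω * δ j := by
    intro j
    funext ω
    rw [Real.norm_eq_abs, abs_of_nonneg]
    exact mul_nonneg (Set.indicator_nonneg (fun _ _ => zero_le_one) ω) (hδ_nonneg j)
  have hFbound : ∀ j, (μ (e j)).toReal * δ j ≤ δ j := by
    intro j
    calc (μ (e j)).toReal * δ j ≤ 1 * δ j :=
          mul_le_mul_of_nonneg_right (htoReal_le_one _) (hδ_nonneg j)
      _ = δ j := one_mul _
  have hFsum : Summable fun j => ∫ ω, ‖Set.indicator (e j) (fun _ => (1:ℝ)) ω * δ j‖ ∂μ := by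
    refine Summable.of_nonneg_of_le (fun j => ?_) (fun j => ?_) hδ_summable
    · exact integral_nonneg fun ω => norm_nonneg _
    · rw [hFnorm j, hFval j]; exact hFbound j
  have step2 : ∫ ω, (∑' j, Set.indicator (e j) (fun _ => (1:ℝ)) ω * δ j) ∂μ
      = ∑' j, (μ (e j)).toReal * δ j := by
    rw [← integral_tsum_of_summable_integral_norm hFint hFsum]
    exact tsum_congr hFval
  -- Step 3: concentration bound for each component
  have hconc : ∀ j, (μ (e j)).toReal ≤ Real.exp (-(n:ℝ) * δ j ^ 2 / 2) := by
    intro j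
    set W : Fin n → Ω → ℝ := fun i ω =>
      (2 * Y i ω - 1) * (T j).indicator (fun _ => (1:ℝ)) (X i ω) with hW_def
    have hWmeas : ∀ i, Measurable (W i) := fun i =>
      (((hY_meas i).const_mul 2).sub measurable_const).mul
        ((measurable_const.indicator (hT_meas j)).comp (hX_meas i))
    have hWb : ∀ i ω, |W i ω| ≤ 1 := by
      intro i ω
      rw [hW_def]
      simp only [abs_mul]
      have h1 : |2 * Y i ω - 1| = 1 := by
        rcases hY_val i ω with h | h <;> rw [h] <;> norm_num
      have h2 : |(T j).indicator (fun _ => (1:ℝ)) (X i ω)| ≤ 1 := by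
        rw [Set.indicator_apply]
        by_cases h : X i ω ∈ T j <;> simp [h]
      rw [h1, one_mul]
      exact h2
    have hφ_meas : Measurable (fun q : EuclideanSpace ℝ (Fin d) × ℝ =>
        (2 * q.2 - 1) * (T j).indicator (fun _ => (1:ℝ)) q.1) :=
      ((measurable_snd.const_mul 2).sub measurable_const).mul
        ((measurable_const.indicator (hT_meas j)).comp measurable_fst)
    have hWindep : iIndepFun W μ :=
      h_indep.comp (fun _ q => (2 * q.2 - 1) * (T j).indicator (fun _ => (1:ℝ)) q.1)
        (fun _ => hφ_meas)
    have hWint : ∀ i, ∫ ω, W i ω ∂μ = ∫ x in T j, (2 * η x - 1) * p x :=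
      fun i => h_mean i (T j) (hT_meas j)
    by_cases hc : ∀ x ∈ T j, (1:ℝ)/2 ≤ η x
    · have hej : e j = {ω | Z j ω ≤ 0} := by simp only [he_def]; rw [if_pos hc]
      have hδeq : ∫ x in T j, (2 * η x - 1) * p x = δ j := by
        refine setIntegral_congr_fun (hT_meas j) fun x hx => ?_
        have : 0 ≤ 2 * η x - 1 := by linarith [hc x hx]
        rw [hg_def]
        simp only
        rw [abs_of_nonneg this]
      have hmean : ∀ i, ∫ ω, W i ω ∂μ = δ j := fun i => (hWint i).trans hδeq
      rw [hej]
      exact conc μ W hWmeas hWb hWindep (hδ_nonneg j) (hδ_le_one j) hmean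
    · have hej : e j = {ω | 0 < Z j ω} := by
        simp only [he_def]
        rw [if_neg hc]
      have hc' : ∀ x ∈ T j, η x < 1/2 := (hCA j).resolve_left hc
      have hδeq : ∫ x in T j, (2 * η x - 1) * p x = -δ j := by
        rw [hδ_def]
        simp only
        rw [← integral_neg]
        refine setIntegral_congr_fun (hT_meas j) fun x hx => ?_
        have : 2 * η x - 1 < 0 := by linarith [hc' x hx]
        rw [hg_def]
        simp only
        rw [abs_of_neg this]
        ring
      have hmean : ∀ i, ∫ ω, (-(W i ω)) ∂μ = δ j := by
        intro i
        rw [integral_neg, hWint i, hδeq, neg_neg]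
      have hsub : (μ (e j)).toReal ≤ (μ {ω | (∑ i, -(W i ω)) ≤ 0}).toReal := by
        refine ENNReal.toReal_mono (measure_ne_top μ _) (measure_mono ?_)
        rw [hej]
        intro ω hω
        simp only [Set.mem_setOf_eq] at hω ⊢
        rw [Finset.sum_neg_distrib]
        have : 0 ≤ Z j ω := le_of_lt hω
        simpa using this
      refine hsub.trans ?_
      exact conc μ (fun i ω => -(W i ω)) (fun i => (hWmeas i).neg)
        (fun i ω => by rw [abs_neg]; exact hWb i ω)
        (h_indep.comp (fun _ q => -((2 * q.2 - 1) * (T j).indicator (fun _ => (1:ℝ)) q.1))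
          (fun _ => hφ_meas.neg))
        (hδ_nonneg j) (hδ_le_one j) hmean
  -- Final assembly
  have hsum1 : Summable (fun j => (μ (e j)).toReal * δ j) := by
    refine Summable.of_nonneg_of_le (fun j => ?_) hFbound hδ_summable
    exact mul_nonneg ENNReal.toReal_nonneg (hδ_nonneg j)
  have hexp_le_one : ∀ j, Real.exp (-(n:ℝ) * δ j ^ 2 / 2) ≤ 1 := by
    intro j
    rw [Real.exp_le_one_iff]
    have h1 : 0 ≤ (n:ℝ) * δ j ^ 2 := mul_nonneg (Nat.cast_nonneg n) (sq_nonneg _)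
    linarith
  have hsum2 : Summable (fun j => 2 * (δ j * Real.exp (-(n:ℝ) * δ j ^ 2 / 2))) := by
    refine Summable.of_nonneg_of_le (fun j => ?_) (fun j => ?_) (hδ_summable.mul_left 2)
    · exact mul_nonneg (by norm_num) (mul_nonneg (hδ_nonneg j) (Real.exp_pos _).le)
    · have : δ j * Real.exp (-(n:ℝ) * δ j ^ 2 / 2) ≤ δ j * 1 :=
        mul_le_mul_of_nonneg_left (hexp_le_one j) (hδ_nonneg j)
      rw [mul_one] at this
      linarith
  calc ∫ ω, (∫ x in {x | lam ≤ p x},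
        |2 * η x - 1| *
          (if (if ∃ j, x ∈ T j ∧ 0 < Z j ω then (1:ℝ) else 0)
              ≠ (if (1:ℝ)/2 ≤ η x then (1:ℝ) else 0) then 1 else 0) * p x) ∂μ
      = ∫ ω, (∑' j, Set.indicator (e j) (fun _ => (1:ℝ)) ω * δ j) ∂μ :=
        integral_congr_ae (ae_of_all _ step1)
    _ = ∑' j, (μ (e j)).toReal * δ j := step2
    _ ≤ ∑' j, 2 * (δ j * Real.exp (-(n:ℝ) * δ j ^ 2 / 2)) := by
        refine Summable.tsum_le_tsum (fun j => ?_) hsum1 hsum2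
        have h1 : (μ (e j)).toReal * δ j ≤ Real.exp (-(n:ℝ) * δ j ^ 2 / 2) * δ j :=
          mul_le_mul_of_nonneg_right (hconc j) (hδ_nonneg j)
        have h2 : 0 ≤ δ j * Real.exp (-(n:ℝ) * δ j ^ 2 / 2) :=
          mul_nonneg (hδ_nonneg j) (Real.exp_pos _).le
        linarith
    _ = 2 * ∑' j, δ j * Real.exp (-(n:ℝ) * δ j ^ 2 / 2) := tsum_mul_left
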